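/- Let B_c > 0 and A⁰(y) = cos(2πy). Then for all l, m ∈ ℕ there exist real numbers a_{l,m} and b_{l,m} such that for all p ∈ ℝ: A⁰_{l,m}(p) = a_{l,m}·cos(2πp) + b_{l,m}·sin(2πp); moreover a_{l,m} = 0 whenever m + l is even, and b_{l,m} = 0 whenever m + l is odd. -/

import Mathlib

/-!
Each Weber–Hermite function is a polynomial times `exp (-x ^ 2 / 2)` and has parity `(-1) ^ m`.
Hence the weight `W y = y * Ω_l (√B_c y) * Ω_m (√B_c y)` is a polynomial times a Gaussian, so
integrable, and has parity `(-1) ^ (l + m + 1)`. The addition formula for `cos (2π (y + p))` gives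
`a = B_c^{3/2} ∫ cos (2π y) W y` and `b = -B_c^{3/2} ∫ sin (2π y) W y`, and whichever of the two
integrands is odd integrates to zero.
-/

open Real MeasureTheory

/-- The `m`-th Weber–Hermite function (normalized Hermite function). -/
noncomputable def weberHermite (m : ℕ) (y : ℝ) : ℝ :=
  ((-1 : ℝ) ^ m / Real.sqrt (Real.sqrt π * 2 ^ m * m.factorial)) *
    Real.exp (y ^ 2 / 2) * iteratedDeriv m (fun t => Real.exp (-t ^ 2)) y

/-- `A⁰_{l,m}(p) = B_c^{3/2} ∫ A⁰(y+p) y Ω_l(√B_c y) Ω_m(√B_c y) dy`. -/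
noncomputable def Acoef0 (Bc : ℝ) (A0 : ℝ → ℝ) (l m : ℕ) (p : ℝ) : ℝ :=
  Bc ^ ((3 : ℝ) / 2) * ∫ y : ℝ, A0 (y + p) * y *
    weberHermite l (Real.sqrt Bc * y) * weberHermite m (Real.sqrt Bc * y)

open Polynomial

theorem Function.Odd.integral_eq_zero {G E : Type*} [MeasurableSpace G] [AddGroup G]
    [MeasurableNeg G] [NormedAddCommGroup E] [NormedSpace ℝ E] {μ : Measure G}
    [μ.IsNegInvariant] {f : G → E} (hf : f.Odd) : ∫ x, f x ∂μ = 0 := by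
  have h := integral_neg_eq_self f μ
  simp only [hf.eq, integral_neg] at h
  have h2 : (2 : ℝ) • ∫ x, f x ∂μ = 0 := by rw [two_smul]; nth_rw 1 [← h]; exact neg_add_cancel _
  exact (smul_eq_zero.mp h2).resolve_left two_ne_zero

theorem integrable_pow_mul_exp_neg_mul_sq {b : ℝ} (hb : 0 < b) (n : ℕ) :
    Integrable fun x : ℝ => x ^ n * exp (-b * x ^ 2) := by
  simpa using integrable_rpow_mul_exp_neg_mul_sq hb (s := n)
    (neg_one_lt_zero.trans_le n.cast_nonneg)

theorem Polynomial.integrable_eval_mul_exp_neg_mul_sq {b : ℝ} (hb : 0 < b) (P : ℝ[X]) :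
    Integrable fun x : ℝ => P.eval x * exp (-b * x ^ 2) := by
  induction P using Polynomial.induction_on' with
  | add P Q hP hQ => simp only [eval_add, add_mul]; exact hP.add hQ
  | monomial n a =>
    simpa only [eval_monomial, mul_assoc] using (integrable_pow_mul_exp_neg_mul_sq hb n).const_mul a

theorem integral_cos_mul_add_mul {W : ℝ → ℝ} (hW : Integrable W) (ω p : ℝ) :
    ∫ y, cos (ω * (y + p)) * W y
      = cos (ω * p) * (∫ y, cos (ω * y) * W y) - sin (ω * p) * ∫ y, sin (ω * y) * W y := by
  have hcos : Integrable fun y => cos (ω * y) * W y :=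
    hW.bdd_mul (c := 1) (by fun_prop : Continuous _).aestronglyMeasurable
      (ae_of_all _ fun y => by simpa using abs_cos_le_one (ω * y))
  have hsin : Integrable fun y => sin (ω * y) * W y :=
    hW.bdd_mul (c := 1) (by fun_prop : Continuous _).aestronglyMeasurable
      (ae_of_all _ fun y => by simpa using abs_sin_le_one (ω * y))
  rw [← integral_const_mul, ← integral_const_mul, ← integral_sub (hcos.const_mul _)
    (hsin.const_mul _)]
  congr 1 with y
  rw [mul_add, cos_add]
  ring

theorem exists_iteratedDeriv_exp_neg_sq_eq (m : ℕ) :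
    ∃ P : ℝ[X], ∀ y : ℝ, iteratedDeriv m (fun t => exp (-t ^ 2)) y = P.eval y * exp (-y ^ 2) := by
  induction m with
  | zero => exact ⟨1, by simp⟩
  | succ n ih =>
    obtain ⟨P, hP⟩ := ih
    refine ⟨derivative P - 2 * X * P, fun y => ?_⟩
    have hP' : HasDerivAt (fun y => P.eval y * exp (-y ^ 2))
        ((derivative P).eval y * exp (-y ^ 2) + P.eval y * (exp (-y ^ 2) * (-(2 * y)))) y :=
      (P.hasDerivAt y).mul (((hasDerivAt_pow 2 y).neg.congr_deriv (by ring)).exp)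
    rw [iteratedDeriv_succ, funext hP, hP'.deriv]
    simp only [eval_sub, eval_mul, eval_X, eval_ofNat]
    ring

theorem exists_weberHermite_eq (m : ℕ) :
    ∃ P : ℝ[X], ∀ x : ℝ, weberHermite m x = P.eval x * exp (-x ^ 2 / 2) := by
  obtain ⟨P, hP⟩ := exists_iteratedDeriv_exp_neg_sq_eq m
  refine ⟨C ((-1) ^ m / √(√π * 2 ^ m * m.factorial)) * P, fun x => ?_⟩
  have hexp : exp (x ^ 2 / 2) * exp (-x ^ 2) = exp (-x ^ 2 / 2) := by
    rw [← exp_add]; ring_nf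
  rw [weberHermite, hP, eval_mul, eval_C, ← hexp]
  ring

theorem weberHermite_neg (m : ℕ) (x : ℝ) :
    weberHermite m (-x) = (-1) ^ m * weberHermite m x := by
  have h := iteratedDeriv_comp_neg m (fun t : ℝ => exp (-t ^ 2)) x
  simp only [neg_sq, smul_eq_mul] at h
  have hsq : ((-1 : ℝ) ^ m) * (-1) ^ m = 1 := by rw [← mul_pow]; norm_num
  have h' : iteratedDeriv m (fun t : ℝ => exp (-t ^ 2)) (-x)
      = (-1) ^ m * iteratedDeriv m (fun t : ℝ => exp (-t ^ 2)) x := by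
    rw [h, ← mul_assoc, hsq, one_mul]
  rw [weberHermite, weberHermite, neg_sq, h']
  ring

noncomputable def acoefWeight (Bc : ℝ) (l m : ℕ) (y : ℝ) : ℝ :=
  y * weberHermite l (√Bc * y) * weberHermite m (√Bc * y)

theorem Acoef0_eq_integral_mul_acoefWeight (Bc : ℝ) (A0 : ℝ → ℝ) (l m : ℕ) (p : ℝ) :
    Acoef0 Bc A0 l m p = Bc ^ ((3 : ℝ) / 2) * ∫ y, A0 (y + p) * acoefWeight Bc l m y := by
  simp only [Acoef0, acoefWeight, mul_assoc]

theorem integrable_acoefWeight {Bc : ℝ} (hBc : 0 < Bc) (l m : ℕ) :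
    Integrable (acoefWeight Bc l m) := by
  obtain ⟨P, hP⟩ := exists_weberHermite_eq l
  obtain ⟨Q, hQ⟩ := exists_weberHermite_eq m
  have hexp (y : ℝ) : exp (-(√Bc * y) ^ 2 / 2) * exp (-(√Bc * y) ^ 2 / 2) = exp (-Bc * y ^ 2) := by
    rw [← exp_add, mul_pow, sq_sqrt hBc.le]; ring_nf
  have h : acoefWeight Bc l m = fun y =>
      (X * P.comp (C √Bc * X) * Q.comp (C √Bc * X)).eval y * exp (-Bc * y ^ 2) := by
    funext y
    simp only [acoefWeight, hP, hQ, eval_mul, eval_comp, eval_X, eval_C, ← hexp]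
    ring
  rw [h]
  exact integrable_eval_mul_exp_neg_mul_sq hBc _

theorem acoefWeight_neg (Bc : ℝ) (l m : ℕ) (y : ℝ) :
    acoefWeight Bc l m (-y) = -((-1) ^ (m + l) * acoefWeight Bc l m y) := by
  simp only [acoefWeight, mul_neg, weberHermite_neg, pow_add]
  ring

theorem acoefWeight_odd {Bc : ℝ} {l m : ℕ} (h : Even (m + l)) : (acoefWeight Bc l m).Odd :=
  fun y => by rw [acoefWeight_neg, h.neg_one_pow, one_mul]

theorem acoefWeight_even {Bc : ℝ} {l m : ℕ} (h : Odd (m + l)) : (acoefWeight Bc l m).Even :=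
  fun y => by rw [acoefWeight_neg, h.neg_one_pow, neg_one_mul, neg_neg]

theorem integral_cos_mul_acoefWeight_eq_zero {Bc : ℝ} {l m : ℕ} (h : Even (m + l)) (ω : ℝ) :
    ∫ y, cos (ω * y) * acoefWeight Bc l m y = 0 :=
  have hcos : Function.Even fun y => cos (ω * y) := fun y => by simp only [mul_neg, cos_neg]
  (hcos.mul_odd (acoefWeight_odd h)).integral_eq_zero

theorem integral_sin_mul_acoefWeight_eq_zero {Bc : ℝ} {l m : ℕ} (h : Odd (m + l)) (ω : ℝ) :
    ∫ y, sin (ω * y) * acoefWeight Bc l m y = 0 :=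
  have hsin : Function.Odd fun y => sin (ω * y) := fun y => by simp only [mul_neg, sin_neg]
  (hsin.mul_even (acoefWeight_even h)).integral_eq_zero

/-- **For `A⁰(y) = cos(2πy)`,** `A⁰_{l,m}(p) = a_{l,m} cos(2πp) + b_{l,m} sin(2πp)`
with `a_{l,m} = 0` if `m + l` is even and `b_{l,m} = 0` if `m + l` is odd. -/
theorem Acoef0_cos (Bc : ℝ) (hBc : 0 < Bc) (l m : ℕ) :
    ∃ a b : ℝ,
      (∀ p : ℝ, Acoef0 Bc (fun y => Real.cos (2 * π * y)) l m p =
        a * Real.cos (2 * π * p) + b * Real.sin (2 * π * p)) ∧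
      (Even (m + l) → a = 0) ∧ (Odd (m + l) → b = 0) := by
  set W := acoefWeight Bc l m
  refine ⟨Bc ^ ((3 : ℝ) / 2) * ∫ y, cos (2 * π * y) * W y,
    -(Bc ^ ((3 : ℝ) / 2) * ∫ y, sin (2 * π * y) * W y), fun p => ?_, fun h => ?_, fun h => ?_⟩
  · rw [Acoef0_eq_integral_mul_acoefWeight,
      integral_cos_mul_add_mul (integrable_acoefWeight hBc l m)]
    ring
  · rw [integral_cos_mul_acoefWeight_eq_zero h, mul_zero]
  · rw [integral_sin_mul_acoefWeight_eq_zero h, mul_zero, neg_zero]
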